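/- arXiv:2208.08500 — 3 statements merged into one kernel-verified Lean document; each statement's English description precedes it below -/
import Mathlib

section
/- Let $(u_\lambda, \mathcal{V}_\lambda^*, \kappa_\lambda)_{\lambda\in\Lambda}$ be a TI-DFD for a closed injective linear operator $\mathcal{K}$. If $\inf_{\lambda}\kappa_\lambda = 0$ and $\inf_\lambda\|\mathcal{V}_\lambda^*\| > 0$, then $\mathcal{K}^{-1}$ is unbounded. -/
/-!
If `‖f‖ ≤ C ‖𝒦 f‖`, the upper frame bound gives `‖u_λ^* ∗ f‖ ≤ √B ‖f‖`, hence
`‖𝒱_λ^* (𝒦 f)‖ = κ_λ ‖u_λ^* ∗ f‖ ≤ κ_λ √B C ‖𝒦 f‖` on `ran 𝒦` and, by continuity, on its closure.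
So `‖𝒱_λ^*‖ ≤ κ_λ √B C`, and `inf_λ κ_λ = 0` would force `inf_λ ‖𝒱_λ^*‖ = 0`.
-/

open MeasureTheory Complex Real
open scoped Classical

noncomputable section

/-- `Ed d` is Euclidean space `ℝ^d`. -/
abbrev Ed (d : ℕ) := EuclideanSpace ℝ (Fin d)

/-- `L2 d` is the Hilbert space `L²(ℝ^d, ℂ)`. -/
abbrev L2 (d : ℕ) := MeasureTheory.Lp ℂ 2 (volume : Measure (Ed d))

/-- An extension of the Fourier transform (normalization `f̂(ξ) = ∫ f(x) e^{-i⟨ξ,x⟩} dx`)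
to a linear bijection of `L²(ℝ^d)` satisfying the Plancherel identity
`‖f̂‖² = (2π)^d ‖f‖²`. -/
structure FourierL2 (d : ℕ) where
  F : L2 d ≃ₗ[ℂ] L2 d
  plancherel : ∀ f : L2 d, ‖F f‖ ^ 2 = (2 * Real.pi) ^ d * ‖f‖ ^ 2
  eq_integral : ∀ f : L2 d, MeasureTheory.Integrable (f : Ed d → ℂ) →
    (F f : Ed d → ℂ) =ᵐ[volume]
      fun ξ => ∫ x, Complex.exp (-(Complex.I * ((inner ℝ ξ x : ℝ) : ℂ))) * f x

/-- The convolution `u^* ∗ f := 𝓕⁻¹((conj 𝓕u) ⬝ 𝓕f)`, well defined in `L²` whenever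
`𝓕u ∈ L^∞`. -/
def starConv {d : ℕ} (Φ : FourierL2 d) (u f : L2 d) : L2 d :=
  if h : MemLp (fun ξ => (starRingEnd ℂ) ((Φ.F u : Ed d → ℂ) ξ) * (Φ.F f : Ed d → ℂ) ξ)
      2 (volume : Measure (Ed d))
  then Φ.F.symm (h.toLp _) else 0

/-- The convolution `w ∗ c := 𝓕⁻¹((𝓕w) ⬝ 𝓕c)`, well defined in `L²` whenever
`𝓕w ∈ L^∞`. -/
def conv {d : ℕ} (Φ : FourierL2 d) (w c : L2 d) : L2 d :=
  if h : MemLp (fun ξ => (Φ.F w : Ed d → ℂ) ξ * (Φ.F c : Ed d → ℂ) ξ)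
      2 (volume : Measure (Ed d))
  then Φ.F.symm (h.toLp _) else 0

/-- `(u_λ)` is a translation invariant frame of `L²(ℝ^d)` with bounds `A, B`:
all `𝓕u_λ ∈ L^∞` and `A‖f‖² ≤ ∑_λ ‖u_λ^* ∗ f‖² ≤ B‖f‖²` for every `f ∈ L²`. -/
def IsTIFrame {d : ℕ} {Λ : Type*} (Φ : FourierL2 d) (u : Λ → L2 d) (A B : ℝ) : Prop :=
  (∀ l : Λ, MemLp ((Φ.F (u l) : Ed d → ℂ)) ⊤ (volume : Measure (Ed d))) ∧
  0 < A ∧ 0 < B ∧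
  ∀ f : L2 d,
    A * ‖f‖ ^ 2 ≤ ∑' l : Λ, ‖starConv Φ (u l) f‖ ^ 2 ∧
    ∑' l : Λ, ‖starConv Φ (u l) f‖ ^ 2 ≤ B * ‖f‖ ^ 2

theorem starConv_zero_right {d : ℕ} (Φ : FourierL2 d) (u : L2 d) : starConv Φ u 0 = 0 := by
  have hzero : (fun ξ => (starRingEnd ℂ) ((Φ.F u : Ed d → ℂ) ξ) * (Φ.F 0 : Ed d → ℂ) ξ)
      =ᵐ[volume] (0 : Ed d → ℂ) :=
    .of_forall fun ξ => by simp
  unfold starConv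
  split_ifs with h
  · rw [MemLp.toLp_congr h MemLp.zero hzero, MemLp.toLp_zero, map_zero]
  · rfl

theorem norm_le_sqrt_mul_norm_of_frame_bounds {Λ E F : Type*} [NormedAddCommGroup E]
    [NormedAddCommGroup F] {T : Λ → E → F} (hT0 : ∀ l, T l 0 = 0) {A B : ℝ} (hA : 0 < A)
    (hbounds : ∀ f, A * ‖f‖ ^ 2 ≤ ∑' l, ‖T l f‖ ^ 2 ∧ ∑' l, ‖T l f‖ ^ 2 ≤ B * ‖f‖ ^ 2)
    (l : Λ) (f : E) : ‖T l f‖ ≤ √B * ‖f‖ := by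
  by_cases hs : Summable fun l => ‖T l f‖ ^ 2
  · have hsq : ‖T l f‖ ^ 2 ≤ B * ‖f‖ ^ 2 :=
      (hs.le_tsum l fun _ _ => sq_nonneg _).trans (hbounds f).2
    simpa [Real.sqrt_mul' B (sq_nonneg _)] using Real.sqrt_le_sqrt hsq
  · -- a non-summable family has `tsum = 0`, so the lower bound forces `f = 0`
    have hf : f = 0 := by
      have := (hbounds f).1
      rw [tsum_eq_zero_of_not_summable hs] at this
      exact norm_eq_zero.mp (pow_eq_zero_iff two_ne_zero |>.mp
        (le_antisymm (nonpos_of_mul_nonpos_right this hA) (sq_nonneg _)))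
    simp [hf, hT0]

theorem norm_le_mul_norm_of_mem_closure {E F : Type*} [SeminormedAddCommGroup E]
    [SeminormedAddCommGroup F] {T : E → F} (hT : Continuous T) {S : Set E} {M : ℝ}
    (hS : ∀ g ∈ S, ‖T g‖ ≤ M * ‖g‖) {g : E} (hg : g ∈ closure S) : ‖T g‖ ≤ M * ‖g‖ :=
  closure_minimal hS (isClosed_le hT.norm (continuous_const.mul continuous_norm)) hg

theorem IsTIFrame.norm_starConv_le {d : ℕ} {Λ : Type*} {Φ : FourierL2 d} {u : Λ → L2 d}
    {A B : ℝ} (hu : IsTIFrame Φ u A B) (l : Λ) (f : L2 d) :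
    ‖starConv Φ (u l) f‖ ≤ √B * ‖f‖ :=
  norm_le_sqrt_mul_norm_of_frame_bounds (T := fun l => starConv Φ (u l))
    (fun l => starConv_zero_right Φ (u l)) hu.2.1 hu.2.2.2 l f

theorem norm_apply_le_of_mem_closure_range {d : ℕ} {Λ : Type*} {Y : Type*}
    [NormedAddCommGroup Y] [NormedSpace ℂ Y] {Φ : FourierL2 d}
    {dom : Submodule ℂ (L2 d)} {K : dom →ₗ[ℂ] Y} {u : Λ → L2 d} {A B : ℝ}
    (hu : IsTIFrame Φ u A B) {V : Λ → Y →L[ℂ] L2 d} {κ : Λ → ℝ} (hκ : ∀ l, 0 ≤ κ l)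
    (hdiag : ∀ (f : dom) (l : Λ), V l (K f) = κ l • starConv Φ (u l) (f : L2 d))
    {C : ℝ} (hC : ∀ f : dom, ‖(f : L2 d)‖ ≤ C * ‖K f‖) (l : Λ) {g : Y}
    (hg : g ∈ closure (Set.range fun f : dom => K f)) :
    ‖V l g‖ ≤ κ l * (√B * C) * ‖g‖ := by
  refine norm_le_mul_norm_of_mem_closure (V l).continuous ?_ hg
  rintro _ ⟨f, rfl⟩
  calc ‖V l (K f)‖ = κ l * ‖starConv Φ (u l) (f : L2 d)‖ := by
        rw [hdiag, norm_smul, Real.norm_of_nonneg (hκ l)]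
    _ ≤ κ l * (√B * (C * ‖K f‖)) :=
        mul_le_mul_of_nonneg_left ((hu.norm_starConv_le l _).trans (by gcongr; exact hC f)) (hκ l)
    _ = κ l * (√B * C) * ‖K f‖ := by ring

theorem ti_dfd_inverse_unbounded_general {d : ℕ} {Λ : Type*}
    {Y : Type*} [NormedAddCommGroup Y] [InnerProductSpace ℂ Y]
    (Φ : FourierL2 d)
    (dom : Submodule ℂ (L2 d)) (K : dom →ₗ[ℂ] Y)
    -- the TI-DFD (u, 𝒱^*, κ):
    (u : Λ → L2 d) (hu : ∃ A B : ℝ, IsTIFrame Φ u A B)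
    (V : Λ → Y →L[ℂ] L2 d)
    (κ : Λ → ℝ) (hκ : ∀ l, 0 < κ l)
    (hdiag : ∀ (f : dom) (l : Λ), V l (K f) = κ l • starConv Φ (u l) (f : L2 d))
    -- inf_λ κ_λ = 0:
    (hinf0 : ∀ ε > (0 : ℝ), ∃ l : Λ, κ l < ε)
    -- inf_λ ‖𝒱_λ^*|_{closure ran 𝒦}‖ > 0:
    (hVlow : ∃ c > (0 : ℝ), ∀ l : Λ, ∃ g ∈ closure (Set.range fun f : dom => K f),
      ‖g‖ ≤ 1 ∧ c ≤ ‖V l g‖) :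
    ¬ ∃ C : ℝ, ∀ f : dom, ‖(f : L2 d)‖ ≤ C * ‖K f‖ := by
  rintro ⟨C, hC⟩
  obtain ⟨A, B, hu⟩ := hu
  obtain ⟨c, hc, hVg⟩ := hVlow
  have hC₀ : ∀ f : dom, ‖(f : L2 d)‖ ≤ max C 0 * ‖K f‖ := fun f =>
    (hC f).trans (by gcongr; exact le_max_left C 0)
  set M := √B * max C 0
  have hM : 0 ≤ M := by positivity
  have hcκ : ∀ l, c ≤ κ l * M := fun l => by
    obtain ⟨g, hg, hg1, hcg⟩ := hVg l
    calc c ≤ ‖V l g‖ := hcg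
      _ ≤ κ l * M * ‖g‖ :=
        norm_apply_le_of_mem_closure_range hu (fun l => (hκ l).le) hdiag hC₀ l hg
      _ ≤ κ l * M := mul_le_of_le_one_right (mul_nonneg (hκ l).le hM) hg1
  obtain ⟨l, hl⟩ := hinf0 (c / (M + 1)) (by positivity)
  have hκl : κ l * (M + 1) < c := (lt_div_iff₀ (by positivity)).mp hl
  nlinarith [hcκ l, hκ l]

/-- If `(u_λ, 𝒱_λ^*, κ_λ)` is a TI-DFD for a closed injective linear
operator `𝒦`, `inf_λ κ_λ = 0` and `inf_λ ‖𝒱_λ^*‖ > 0` (operator norms of the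
restrictions to the closure of `ran 𝒦`), then `𝒦⁻¹` is unbounded. -/
theorem ti_dfd_inverse_unbounded {d : ℕ} {Λ : Type*} [Countable Λ]
    {Y : Type*} [NormedAddCommGroup Y] [InnerProductSpace ℂ Y] [CompleteSpace Y]
    (Φ : FourierL2 d)
    (dom : Submodule ℂ (L2 d)) (K : dom →ₗ[ℂ] Y)
    (hclosed : IsClosed {p : L2 d × Y | ∃ hp : p.1 ∈ dom, K ⟨p.1, hp⟩ = p.2})
    (hinj : Function.Injective K)
    -- the TI-DFD (u, 𝒱^*, κ):
    (u : Λ → L2 d) (hu : ∃ A B : ℝ, IsTIFrame Φ u A B)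
    (V : Λ → Y →L[ℂ] L2 d)
    (hV : ∃ A B : ℝ, 0 < A ∧ 0 < B ∧ ∀ g ∈ closure (Set.range fun f : dom => K f),
      A * ‖g‖ ^ 2 ≤ ∑' l : Λ, ‖V l g‖ ^ 2 ∧ ∑' l : Λ, ‖V l g‖ ^ 2 ≤ B * ‖g‖ ^ 2)
    (κ : Λ → ℝ) (hκ : ∀ l, 0 < κ l)
    (hdiag : ∀ (f : dom) (l : Λ), V l (K f) = κ l • starConv Φ (u l) (f : L2 d))
    -- inf_λ κ_λ = 0:
    (hinf0 : ∀ ε > (0 : ℝ), ∃ l : Λ, κ l < ε)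
    -- inf_λ ‖𝒱_λ^*|_{closure ran 𝒦}‖ > 0:
    (hVlow : ∃ c > (0 : ℝ), ∀ l : Λ, ∃ g ∈ closure (Set.range fun f : dom => K f),
      ‖g‖ ≤ 1 ∧ c ≤ ‖V l g‖) :
    ¬ ∃ C : ℝ, ∀ f : dom, ‖(f : L2 d)‖ ≤ C * ‖K f‖ :=
  ti_dfd_inverse_unbounded_general Φ dom K u hu V κ hκ hdiag hinf0 hVlow

end
end

section
/- Let $(\Phi_\alpha)_{\alpha>0}$ be a regularizing filter and $(u_\lambda,\mathcal{V}_\lambda^*,\kappa_\lambda)$ a TI-DFD for the closed injective operator $\mathcal{K}$ with dual TI-frame $(w_\lambda)$. Then for every $g\in\mathrm{ran}(\mathcal{K})$, $\lim_{\alpha\to 0}\mathcal{R}_\alpha^\Phi g = \mathcal{K}^{-1}g$ in $L^2(\mathbb{R}^d)$, where $\mathcal{R}_\alpha^\Phi g = \sum_\lambda w_\lambda\ast(\Phi_\alpha(\kappa_\lambda)\mathcal{V}_\lambda^* g)$. -/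
/-!
Write `x_λ = u_λ^* ∗ f`. The diagonal relation turns the regularized series into
`∑_λ w_λ ∗ (κ_λ Φ_α(κ_λ) x_λ)`, and the dual-frame identity gives `f = ∑_λ w_λ ∗ x_λ`.
By Plancherel, convolution with `w_λ` is adjoint to convolution with `w_λ^*`, so the synthesis
operator of the TI-frame `(w_λ)` is the adjoint of its analysis operator and has norm at most
`√B`. Hence `‖ℛ_α g - f‖² ≤ B ∑_λ (κ_λ Φ_α(κ_λ) - 1)² ‖x_λ‖²`. The multipliers
`κ_λ Φ_α(κ_λ) - 1` are bounded by `C + 1` and tend to `0` for each `λ`, and `∑_λ ‖x_λ‖² < ∞` by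
the frame property of `(u_λ)`, so the right-hand side tends to `0` by dominated convergence
over `λ`.
-/

open MeasureTheory Complex Real
open scoped Classical

noncomputable section

namespace FourierL2

variable {d : ℕ} (Φ : FourierL2 d)

theorem inner_map_map (f g : L2 d) :
    inner ℂ (Φ.F f) (Φ.F g) = (((2 * π) ^ d : ℝ) : ℂ) * inner ℂ f g := by
  have hnorm (h : L2 d) : (‖Φ.F h‖ : ℂ) ^ 2 = (((2 * π) ^ d : ℝ) : ℂ) * (‖h‖ : ℂ) ^ 2 := by
    exact_mod_cast Φ.plancherel h
  rw [inner_eq_sum_norm_sq_div_four (Φ.F f), inner_eq_sum_norm_sq_div_four f, ← map_add,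
    ← map_sub, ← map_smul, ← map_sub, ← map_add]
  simp only [Complex.coe_algebraMap, hnorm]
  ring

theorem memLp_mul {w : L2 d} (hw : MemLp (Φ.F w : Ed d → ℂ) ⊤ volume) (c : L2 d) :
    MemLp (fun ξ => (Φ.F w : Ed d → ℂ) ξ * (Φ.F c : Ed d → ℂ) ξ) 2 volume :=
  (Lp.memLp (Φ.F c)).mul' hw

theorem memLp_conj_mul {w : L2 d} (hw : MemLp (Φ.F w : Ed d → ℂ) ⊤ volume) (c : L2 d) :
    MemLp (fun ξ => starRingEnd ℂ ((Φ.F w : Ed d → ℂ) ξ) * (Φ.F c : Ed d → ℂ) ξ) 2 volume :=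
  (Lp.memLp (Φ.F c)).mul' hw.star

end FourierL2

section Convolution

variable {d : ℕ} (Φ : FourierL2 d) {w : L2 d}

theorem inner_conv_left (hw : MemLp (Φ.F w : Ed d → ℂ) ⊤ volume) (c h : L2 d) :
    inner ℂ (conv Φ w c) h = inner ℂ c (starConv Φ w h) := by
  have hP := Φ.memLp_mul hw c
  have hQ := Φ.memLp_conj_mul hw h
  refine mul_left_cancel₀ (a := (((2 * π) ^ d : ℝ) : ℂ))
    (Complex.ofReal_ne_zero.2 (by positivity)) ?_
  rw [← Φ.inner_map_map, ← Φ.inner_map_map, conv, starConv, dif_pos hP, dif_pos hQ,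
    LinearEquiv.apply_symm_apply, LinearEquiv.apply_symm_apply, L2.inner_def, L2.inner_def]
  refine integral_congr_ae ?_
  filter_upwards [hP.coeFn_toLp, hQ.coeFn_toLp] with ξ hPξ hQξ
  rw [RCLike.inner_apply, RCLike.inner_apply, hPξ, hQξ, map_mul]
  ring

theorem conv_sub (hw : MemLp (Φ.F w : Ed d → ℂ) ⊤ volume) (x y : L2 d) :
    conv Φ w (x - y) = conv Φ w x - conv Φ w y :=
  ext_inner_right ℂ fun h => by simp only [inner_conv_left Φ hw, inner_sub_left]

theorem starConv_zero (hw : MemLp (Φ.F w : Ed d → ℂ) ⊤ volume) : starConv Φ w 0 = 0 :=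
  ext_inner_left ℂ fun c => by rw [← inner_conv_left Φ hw, inner_zero_right, inner_zero_right]

end Convolution

open Filter Topology

section Synthesis

variable {𝕜 E ι : Type*} [RCLike 𝕜] [NormedAddCommGroup E] [InnerProductSpace 𝕜 E]

theorem norm_sum_sq_le_of_inner_eq {T S : ι → E → E}
    (hTS : ∀ i x h, inner 𝕜 (T i x) h = inner 𝕜 x (S i h)) {B : ℝ} (hB : 0 ≤ B)
    (s : Finset ι) (hS : ∀ h, ∑ i ∈ s, ‖S i h‖ ^ 2 ≤ B * ‖h‖ ^ 2) (x : ι → E) :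
    ‖∑ i ∈ s, T i (x i)‖ ^ 2 ≤ B * ∑ i ∈ s, ‖x i‖ ^ 2 := by
  set y := ∑ i ∈ s, T i (x i)
  set X := ∑ i ∈ s, ‖x i‖ ^ 2
  have hy : ‖y‖ * ‖y‖ ≤ (√X * √B) * ‖y‖ := calc
    ‖y‖ * ‖y‖ = RCLike.re (inner 𝕜 y y) := (inner_self_eq_norm_mul_norm y).symm
    _ = ∑ i ∈ s, RCLike.re (inner 𝕜 (x i) (S i y)) := by
      simp only [y, sum_inner, hTS, map_sum]
    _ ≤ ∑ i ∈ s, ‖x i‖ * ‖S i y‖ := Finset.sum_le_sum fun i _ => re_inner_le_norm _ _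
    _ ≤ √X * √(∑ i ∈ s, ‖S i y‖ ^ 2) := Real.sum_mul_le_sqrt_mul_sqrt _ _ _
    _ ≤ √X * √(B * ‖y‖ ^ 2) := by gcongr; exact hS y
    _ = (√X * √B) * ‖y‖ := by
      rw [Real.sqrt_mul' _ (sq_nonneg _), Real.sqrt_sq (norm_nonneg _), mul_assoc]
  have hy' : ‖y‖ ≤ √X * √B := by
    rcases (norm_nonneg y).eq_or_lt with hy0 | hy0
    · rw [← hy0]; positivity
    · exact le_of_mul_le_mul_right hy hy0
  calc ‖y‖ ^ 2 ≤ (√X * √B) ^ 2 := pow_le_pow_left₀ (norm_nonneg _) hy' 2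
    _ = B * X := by
      rw [mul_pow, Real.sq_sqrt (Finset.sum_nonneg fun i _ => sq_nonneg _), Real.sq_sqrt hB,
        mul_comm]

end Synthesis

section RealMultipliers

variable {E ι : Type*} [NormedAddCommGroup E] [NormedSpace ℝ E]

theorem sq_norm_smul_le {c M : ℝ} (hc : |c| ≤ M) (x : E) : ‖c • x‖ ^ 2 ≤ M ^ 2 * ‖x‖ ^ 2 := by
  rw [norm_smul, mul_pow, Real.norm_eq_abs]
  gcongr

theorem Summable.sq_norm_smul {x : ι → E} (hx : Summable fun i => ‖x i‖ ^ 2) {m : ι → ℝ} {M : ℝ}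
    (hm : ∀ i, |m i| ≤ M) : Summable fun i => ‖m i • x i‖ ^ 2 :=
  (hx.mul_left (M ^ 2)).of_nonneg_of_le (fun _ => sq_nonneg _) fun i => sq_norm_smul_le (hm i) _

theorem abs_mul_sub_one_le {Φfil : ℝ → ℝ → ℝ} {C α k : ℝ}
    (hC : ∀ α > (0 : ℝ), ∀ k > (0 : ℝ), |k * Φfil α k| ≤ C) (hα : 0 < α) (hk : 0 < k) :
    |k * Φfil α k - 1| ≤ C + 1 :=
  (abs_sub _ _).trans (by simpa using hC α hα k hk)

theorem tendsto_tsum_sq_norm_filter_residual {Φfil : ℝ → ℝ → ℝ} {κ : ι → ℝ} {C : ℝ}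
    (hκ : ∀ i, 0 < κ i) (hC : ∀ α > (0 : ℝ), ∀ k > (0 : ℝ), |k * Φfil α k| ≤ C)
    (hlim : ∀ k > (0 : ℝ), Tendsto (fun α => Φfil α k) (𝓝[>] 0) (𝓝 (1 / k)))
    {x : ι → E} (hx : Summable fun i => ‖x i‖ ^ 2) :
    Tendsto (fun α => ∑' i, ‖(κ i * Φfil α (κ i) - 1) • x i‖ ^ 2) (𝓝[>] 0) (𝓝 0) := by
  have hpt (i : ι) :
      Tendsto (fun α => ‖(κ i * Φfil α (κ i) - 1) • x i‖ ^ 2) (𝓝[>] 0) (𝓝 0) := by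
    have := ((((hlim (κ i) (hκ i)).const_mul (κ i)).sub_const 1).smul_const (x i)).norm.pow 2
    rwa [mul_one_div_cancel (hκ i).ne', sub_self, zero_smul, norm_zero, zero_pow two_ne_zero]
      at this
  have hbound : ∀ᶠ α in 𝓝[>] (0 : ℝ), ∀ i,
      ‖‖(κ i * Φfil α (κ i) - 1) • x i‖ ^ 2‖ ≤ (C + 1) ^ 2 * ‖x i‖ ^ 2 := by
    filter_upwards [self_mem_nhdsWithin] with α hα i
    rw [Real.norm_of_nonneg (sq_nonneg _)]
    exact sq_norm_smul_le (abs_mul_sub_one_le hC hα (hκ i)) _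
  simpa using tendsto_tsum_of_dominated_convergence (hx.mul_left _) hpt hbound

end RealMultipliers

namespace IsTIFrame

variable {d : ℕ} {Λ : Type*} {Φ : FourierL2 d} {u : Λ → L2 d} {A B : ℝ}

theorem summable_sq_norm_starConv (hu : IsTIFrame Φ u A B) (f : L2 d) :
    Summable fun l => ‖starConv Φ (u l) f‖ ^ 2 := by
  obtain ⟨hinf, hA, -, hbd⟩ := hu
  rcases eq_or_ne f 0 with rfl | hf
  · simp only [starConv_zero Φ (hinf _), norm_zero, zero_pow two_ne_zero, summable_zero]
  · -- a non-summable family has `tsum = 0`, which the lower frame bound rules out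
    by_contra hns
    have hpos : 0 < A * ‖f‖ ^ 2 := by positivity
    linarith [(hbd f).1, tsum_eq_zero_of_not_summable hns]

theorem sum_sq_norm_starConv_le (hu : IsTIFrame Φ u A B) (f : L2 d) (s : Finset Λ) :
    ∑ l ∈ s, ‖starConv Φ (u l) f‖ ^ 2 ≤ B * ‖f‖ ^ 2 :=
  ((hu.summable_sq_norm_starConv f).sum_le_tsum s fun _ _ => sq_nonneg _).trans (hu.2.2.2 f).2

theorem norm_sum_conv_sq_le (hu : IsTIFrame Φ u A B) (s : Finset Λ) (x : Λ → L2 d) :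
    ‖∑ l ∈ s, conv Φ (u l) (x l)‖ ^ 2 ≤ B * ∑ l ∈ s, ‖x l‖ ^ 2 :=
  norm_sum_sq_le_of_inner_eq (fun l => inner_conv_left Φ (hu.1 l)) hu.2.2.1.le s
    (hu.sum_sq_norm_starConv_le · s) x

theorem summable_conv (hu : IsTIFrame Φ u A B) {x : Λ → L2 d}
    (hx : Summable fun l => ‖x l‖ ^ 2) : Summable fun l => conv Φ (u l) (x l) := by
  have hB := hu.2.2.1
  refine summable_iff_vanishing_norm.2 fun ε hε => ?_
  obtain ⟨s, hs⟩ := summable_iff_vanishing_norm.1 hx (ε ^ 2 / B) (by positivity)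
  refine ⟨s, fun t ht => lt_of_pow_lt_pow_left₀ 2 hε.le ?_⟩
  have htail : ∑ l ∈ t, ‖x l‖ ^ 2 < ε ^ 2 / B :=
    (le_abs_self _).trans_lt (hs t ht)
  calc ‖∑ l ∈ t, conv Φ (u l) (x l)‖ ^ 2 ≤ B * ∑ l ∈ t, ‖x l‖ ^ 2 := hu.norm_sum_conv_sq_le t x
    _ < B * (ε ^ 2 / B) := by gcongr
    _ = ε ^ 2 := mul_div_cancel₀ _ hB.ne'

theorem sq_norm_le_of_hasSum_conv (hu : IsTIFrame Φ u A B) {x : Λ → L2 d}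
    (hx : Summable fun l => ‖x l‖ ^ 2) {y : L2 d}
    (hy : HasSum (fun l => conv Φ (u l) (x l)) y) : ‖y‖ ^ 2 ≤ B * ∑' l, ‖x l‖ ^ 2 :=
  le_of_tendsto ((continuous_norm.pow 2).tendsto y |>.comp hy) <| Eventually.of_forall fun s =>
    (hu.norm_sum_conv_sq_le s x).trans <|
      mul_le_mul_of_nonneg_left (hx.sum_le_tsum s fun _ _ => sq_nonneg _) hu.2.2.1.le

end IsTIFrame

theorem filtered_ti_dfd_pointwise_convergence_general {d : ℕ} {Λ : Type*}
    {Y : Type*} [NormedAddCommGroup Y] [InnerProductSpace ℂ Y]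
    (Φ : FourierL2 d)
    (dom : Submodule ℂ (L2 d)) (K : dom →ₗ[ℂ] Y)
    -- the TI-DFD (u, 𝒱^*, κ):
    (u : Λ → L2 d) (hu : ∃ A B : ℝ, IsTIFrame Φ u A B)
    (V : Λ → Y →L[ℂ] L2 d)
    (κ : Λ → ℝ) (hκ : ∀ l, 0 < κ l)
    (hdiag : ∀ (f : dom) (l : Λ), V l (K f) = κ l • starConv Φ (u l) (f : L2 d))
    -- a dual TI-frame (w_λ):
    (w : Λ → L2 d) (hw : ∃ A B : ℝ, IsTIFrame Φ w A B)
    (hdual : ∀ h : L2 d, HasSum (fun l : Λ => conv Φ (w l) (starConv Φ (u l) h)) h)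
    -- a regularizing filter (F1)-(F3):
    (Φfil : ℝ → ℝ → ℝ)
    (hF2 : ∃ C : ℝ, ∀ α > (0 : ℝ), ∀ k > (0 : ℝ), |k * Φfil α k| ≤ C)
    (hF3 : ∀ k > (0 : ℝ), Filter.Tendsto (fun α => Φfil α k)
      (nhdsWithin 0 (Set.Ioi 0)) (nhds (1 / k))) :
    ∀ (g : Y) (f : dom), K f = g →
      (∀ α > (0 : ℝ), ∃ s : L2 d,
        HasSum (fun l : Λ => conv Φ (w l) (Φfil α (κ l) • V l g)) s) ∧
      (∀ ε > (0 : ℝ), ∃ α₀ > (0 : ℝ), ∀ α : ℝ, 0 < α → α < α₀ →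
        ∀ s : L2 d, HasSum (fun l : Λ => conv Φ (w l) (Φfil α (κ l) • V l g)) s →
          ‖s - (f : L2 d)‖ < ε) := by
  obtain ⟨_, _, hu⟩ := hu
  obtain ⟨_, B, hw⟩ := hw
  obtain ⟨C, hC⟩ := hF2
  rintro g f rfl
  set x : Λ → L2 d := fun l => starConv Φ (u l) f
  have hx : Summable fun l => ‖x l‖ ^ 2 := hu.summable_sq_norm_starConv f
  have hterm (α : ℝ) (l : Λ) : Φfil α (κ l) • V l (K f) = (κ l * Φfil α (κ l)) • x l := by
    rw [hdiag, smul_smul, mul_comm]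
  simp only [hterm]
  refine ⟨fun α hα => ⟨_, (hw.summable_conv (hx.sq_norm_smul (hC α hα _ <| hκ ·))).hasSum⟩,
    fun ε hε => ?_⟩
  have hres : Tendsto (fun α => B * ∑' l, ‖(κ l * Φfil α (κ l) - 1) • x l‖ ^ 2)
      (𝓝[>] 0) (𝓝 0) := by
    simpa using (tendsto_tsum_sq_norm_filter_residual hκ hC hF3 hx).const_mul B
  obtain ⟨α₀, hα₀, hsmall⟩ :=
    mem_nhdsGT_iff_exists_Ioo_subset.1 <| hres.eventually <| gt_mem_nhds <| pow_pos hε 2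
  refine ⟨α₀, hα₀, fun α hα hαα₀ s hs => lt_of_pow_lt_pow_left₀ 2 hε.le ?_⟩
  have hsf : HasSum (fun l => conv Φ (w l) ((κ l * Φfil α (κ l) - 1) • x l)) (s - f) := by
    simpa only [sub_smul, one_smul, conv_sub Φ (hw.1 _)] using hs.sub (hdual f)
  have hres_sum : Summable fun l => ‖(κ l * Φfil α (κ l) - 1) • x l‖ ^ 2 :=
    hx.sq_norm_smul fun l => abs_mul_sub_one_le hC hα (hκ l)
  exact (hw.sq_norm_le_of_hasSum_conv hres_sum hsf).trans_lt (hsmall ⟨hα, hαα₀⟩)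

/-- For a regularizing filter `(Φ_α)` and a TI-DFD of the closed
injective operator `𝒦` with dual TI-frame `(w_λ)`, one has pointwise convergence
`ℛ_α g → 𝒦⁻¹ g` in `L²(ℝ^d)` as `α → 0`, for every `g ∈ ran 𝒦`, where
`ℛ_α g = ∑_λ w_λ ∗ (Φ_α(κ_λ) 𝒱_λ^* g)`. -/
theorem filtered_ti_dfd_pointwise_convergence {d : ℕ} {Λ : Type*} [Countable Λ]
    {Y : Type*} [NormedAddCommGroup Y] [InnerProductSpace ℂ Y] [CompleteSpace Y]
    (Φ : FourierL2 d)
    (dom : Submodule ℂ (L2 d)) (K : dom →ₗ[ℂ] Y)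
    (hclosed : IsClosed {p : L2 d × Y | ∃ hp : p.1 ∈ dom, K ⟨p.1, hp⟩ = p.2})
    (hinj : Function.Injective K)
    -- the TI-DFD (u, 𝒱^*, κ):
    (u : Λ → L2 d) (hu : ∃ A B : ℝ, IsTIFrame Φ u A B)
    (V : Λ → Y →L[ℂ] L2 d)
    (hV : ∃ A B : ℝ, 0 < A ∧ 0 < B ∧ ∀ g ∈ closure (Set.range fun f : dom => K f),
      A * ‖g‖ ^ 2 ≤ ∑' l : Λ, ‖V l g‖ ^ 2 ∧ ∑' l : Λ, ‖V l g‖ ^ 2 ≤ B * ‖g‖ ^ 2)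
    (κ : Λ → ℝ) (hκ : ∀ l, 0 < κ l)
    (hdiag : ∀ (f : dom) (l : Λ), V l (K f) = κ l • starConv Φ (u l) (f : L2 d))
    -- a dual TI-frame (w_λ):
    (w : Λ → L2 d) (hw : ∃ A B : ℝ, IsTIFrame Φ w A B)
    (hdual : ∀ h : L2 d, HasSum (fun l : Λ => conv Φ (w l) (starConv Φ (u l) h)) h)
    -- a regularizing filter (F1)-(F3):
    (Φfil : ℝ → ℝ → ℝ)
    (hF1 : ∀ α > (0 : ℝ), ∃ M : ℝ, ∀ k > (0 : ℝ), |Φfil α k| ≤ M)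
    (hF2 : ∃ C : ℝ, ∀ α > (0 : ℝ), ∀ k > (0 : ℝ), |k * Φfil α k| ≤ C)
    (hF3 : ∀ k > (0 : ℝ), Filter.Tendsto (fun α => Φfil α k)
      (nhdsWithin 0 (Set.Ioi 0)) (nhds (1 / k))) :
    ∀ (g : Y) (f : dom), K f = g →
      (∀ α > (0 : ℝ), ∃ s : L2 d,
        HasSum (fun l : Λ => conv Φ (w l) (Φfil α (κ l) • V l g)) s) ∧
      (∀ ε > (0 : ℝ), ∃ α₀ > (0 : ℝ), ∀ α : ℝ, 0 < α → α < α₀ →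
        ∀ s : L2 d, HasSum (fun l : Λ => conv Φ (w l) (Φfil α (κ l) • V l g)) s →
          ‖s - (f : L2 d)‖ < ε) :=
  filtered_ti_dfd_pointwise_convergence_general Φ dom K u hu V κ hκ hdiag w hw hdual Φfil hF2 hF3

end
end

section
/- Let $(u_\lambda,\mathcal{V}_\lambda^*,\kappa_\lambda)$ be a TI-DFD for $\mathcal{K}$ such that $0$ is an accumulation point of $(\kappa_\lambda)$, and suppose there exist $(e_\lambda)$ in $L^2(\mathbb{R}^d)$ with $u_\lambda^*\ast e_{\lambda'}=0$ for $\lambda\ne\lambda'$ and $\|u_\lambda^*\ast e_\lambda\|=1$. Then there is a sequence $\delta_n\to 0$ such that the worst-case error modulus satisfies $\epsilon(\mathcal{M}_{\mu,\rho},\delta_n) \ge \|\mathcal{U}^*\|^{-1}\|(\mathcal{V}^*)^\dagger\|^{-2\mu/(2\mu+1)}\,\delta_n^{2\mu/(2\mu+1)}\rho^{1/(2\mu+1)}$. -/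
open MeasureTheory Complex Real
open scoped Classical

noncomputable section

/-!
Pick channels `λₙ` with `κ_{λₙ} → 0` and test the error modulus on `fₙ = ρ κ_{λₙ}^{2μ} e_{λₙ}`.
By the biorthogonality of `(e_λ)`, `u_λ^* ∗ fₙ` vanishes off `λₙ`, so `fₙ` satisfies the source
condition with `h` concentrated on `λₙ`, and the diagonalisation `𝒱_λ^* 𝒦 = κ_λ u_λ^* ∗ ·` together
with the lower bound of `𝒱^*` gives `‖𝒦 fₙ‖ ≤ cV⁻¹ κ_{λₙ} ρ κ_{λₙ}^{2μ} =: δₙ`. The bound on `𝒰^*`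
gives `‖fₙ‖ ≥ CU⁻¹ ρ κ_{λₙ}^{2μ}`, which is exactly the claimed rate evaluated at `δₙ`.
-/

theorem le_inv_mul_norm_of_sq_mul_le_tsum {ι E : Type*} [SeminormedAddCommGroup E] {x : ι → E}
    {i : ι} (hx : ∀ j ≠ i, x j = 0) {c a : ℝ} (hc : 0 < c)
    (h : c ^ 2 * a ^ 2 ≤ ∑' j, ‖x j‖ ^ 2) : a ≤ c⁻¹ * ‖x i‖ := by
  rw [tsum_eq_single i fun j hj => by simp [hx j hj], ← mul_pow] at h
  rw [le_inv_mul_iff₀ hc]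
  exact (abs_le_of_sq_le_sq' h (norm_nonneg _)).2

theorem inv_mul_norm_le_of_tsum_le {ι E : Type*} [SeminormedAddCommGroup E] {x : ι → E}
    (hx : Summable fun j => ‖x j‖ ^ 2) (i : ι) {C a : ℝ} (ha : 0 ≤ a)
    (h : ∑' j, ‖x j‖ ^ 2 ≤ C ^ 2 * a ^ 2) : C⁻¹ * ‖x i‖ ≤ a := by
  rcases le_or_gt C 0 with hC | hC
  · exact (mul_nonpos_of_nonpos_of_nonneg (inv_nonpos.2 hC) (norm_nonneg _)).trans ha
  have hi : ‖x i‖ ^ 2 ≤ (C * a) ^ 2 :=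
    mul_pow C a 2 ▸ (hx.le_tsum i fun j _ => by positivity).trans h
  rw [inv_mul_le_iff₀ hC]
  exact (pow_le_pow_iff_left₀ (norm_nonneg _) (by positivity) two_ne_zero).1 hi

theorem rpow_rate_identity {c ρ κ p : ℝ} (hc : 0 < c) (hρ : 0 < ρ) (hκ : 0 < κ) (hp : 0 ≤ p) :
    c ^ (p / (p + 1)) * (c⁻¹ * (κ * (ρ * κ ^ p))) ^ (p / (p + 1)) * ρ ^ (1 / (p + 1)) =
      ρ * κ ^ p := by
  have hp1 : p + 1 ≠ 0 := by positivity
  have hsplit : κ * (ρ * κ ^ p) = ρ * κ ^ (p + 1) := by rw [Real.rpow_add_one hκ.ne']; ring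
  rw [← Real.mul_rpow hc.le (by positivity), mul_inv_cancel_left₀ hc.ne', hsplit,
    Real.mul_rpow hρ.le (by positivity), ← Real.rpow_mul hκ.le, mul_div_cancel₀ p hp1,
    mul_right_comm, ← Real.rpow_add hρ, ← add_div, div_self hp1, Real.rpow_one]

section StarConv

variable {d : ℕ} (Φ : FourierL2 d)

theorem starConv_zero_s12 (u : L2 d) : starConv Φ u 0 = 0 := by
  simp [starConv, ← Pi.zero_def]

theorem starConv_smul (u f : L2 d) (c : ℂ) :
    starConv Φ u (c • f) = c • starConv Φ u f := by
  rcases eq_or_ne c 0 with rfl | hc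
  · rw [zero_smul, zero_smul, starConv_zero_s12]
  set g : Ed d → ℂ := fun ξ => starRingEnd ℂ ((Φ.F u : Ed d → ℂ) ξ) * (Φ.F f : Ed d → ℂ) ξ
  have hae : (fun ξ => starRingEnd ℂ ((Φ.F u : Ed d → ℂ) ξ) * (Φ.F (c • f) : Ed d → ℂ) ξ)
      =ᵐ[volume] c • g := by
    filter_upwards [(map_smul Φ.F c f).symm ▸ Lp.coeFn_smul c (Φ.F f)] with ξ hξ
    simp only [hξ, g, Pi.smul_apply, smul_eq_mul]
    ring
  unfold starConv
  by_cases hg : MemLp g 2 volume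
  · have hcg := (memLp_congr_ae hae).2 (hg.const_smul c)
    rw [dif_pos hg, dif_pos hcg, MemLp.toLp_congr hcg (hg.const_smul c) hae,
      MemLp.toLp_const_smul, map_smul]
  · have hcg : ¬ MemLp (c • g) 2 volume := fun h => hg (by
      simpa [smul_smul, inv_mul_cancel₀ hc] using h.const_smul c⁻¹)
    rw [dif_neg hg, dif_neg (mt (memLp_congr_ae hae).1 hcg), smul_zero]

/-- The junk value `∑' = 0` of a non-summable family would, by the lower frame bound, force
`f = 0`, whose family is summable. -/
theorem IsTIFrame.summable {Λ : Type*} {u : Λ → L2 d} {A B : ℝ} (hu : IsTIFrame Φ u A B)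
    (f : L2 d) : Summable fun l => ‖starConv Φ (u l) f‖ ^ 2 := by
  by_contra hs
  obtain ⟨-, hA, -, hframe⟩ := hu
  have hlow := (hframe f).1
  rw [tsum_eq_zero_of_not_summable hs] at hlow
  have hf : f = 0 := norm_eq_zero.1 (pow_eq_zero_iff two_ne_zero |>.1
    (le_antisymm (nonpos_of_mul_nonpos_right hlow hA) (by positivity)))
  exact hs (by simp [hf, starConv_zero_s12, summable_zero])

/-- `f` lies in the source set `ℳ_{μ,ρ}`, up to the requirement `f ∈ dom 𝒦`. -/
def SourceCondition {Λ : Type*} (u : Λ → L2 d) (κ : Λ → ℝ) (μ ρ : ℝ) (f : L2 d) : Prop :=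
  ∃ h : Λ → L2 d, (∑' l : Λ, ‖h l‖ ^ 2) ≤ ρ ^ 2 ∧
    ∀ l : Λ, starConv Φ (u l) f = (κ l ^ (2 * μ) : ℝ) • h l

theorem sourceCondition_of_starConv_eq_zero_of_ne {Λ : Type*} {u : Λ → L2 d} {κ : Λ → ℝ}
    {μ ρ : ℝ} {f : L2 d} {l₀ : Λ} (hκ : 0 < κ l₀) (hzero : ∀ l ≠ l₀, starConv Φ (u l) f = 0)
    (hbound : ‖starConv Φ (u l₀) f‖ ≤ ρ * κ l₀ ^ (2 * μ)) :
    SourceCondition Φ u κ μ ρ f := by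
  set a := κ l₀ ^ (2 * μ)
  have ha : 0 < a := Real.rpow_pos_of_pos hκ _
  refine ⟨Pi.single l₀ (a⁻¹ • starConv Φ (u l₀) f), ?_, fun l => ?_⟩
  · have hl₀ : ‖a⁻¹ • starConv Φ (u l₀) f‖ ≤ ρ := by
      rw [norm_smul, Real.norm_of_nonneg (inv_nonneg.2 ha.le), inv_mul_le_iff₀ ha, mul_comm]
      exact hbound
    rw [tsum_eq_single l₀ fun l hl => by simp [Pi.single_eq_of_ne hl], Pi.single_eq_same]
    exact pow_le_pow_left₀ (norm_nonneg _) hl₀ 2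
  · rcases eq_or_ne l l₀ with rfl | hl
    · rw [Pi.single_eq_same, smul_smul, mul_inv_cancel₀ ha.ne', one_smul]
    · rw [Pi.single_eq_of_ne hl, smul_zero, hzero l hl]

end StarConv

section Channel

variable {d : ℕ} {Λ : Type*} {Φ : FourierL2 d} {u : Λ → L2 d}

theorem starConv_smul_eq_zero_of_ne {e : Λ → L2 d}
    (heorth : ∀ l l' : Λ, l ≠ l' → starConv Φ (u l) (e l') = 0) (t : ℂ) {l l₀ : Λ}
    (hl : l ≠ l₀) : starConv Φ (u l) (t • e l₀) = 0 := by
  rw [starConv_smul, heorth l l₀ hl, smul_zero]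

theorem norm_starConv_smul_self {e : Λ → L2 d} (henorm : ∀ l : Λ, ‖starConv Φ (u l) (e l)‖ = 1)
    (t : ℂ) (l : Λ) : ‖starConv Φ (u l) (t • e l)‖ = ‖t‖ := by
  rw [starConv_smul, norm_smul, henorm, mul_one]

theorem norm_apply_le_of_starConv_eq_zero_of_ne {Y : Type*} [NormedAddCommGroup Y]
    [NormedSpace ℂ Y] {dom : Submodule ℂ (L2 d)} {K : dom →ₗ[ℂ] Y} {V : Λ → Y →L[ℂ] L2 d}
    {κ : Λ → ℝ} (hdiag : ∀ (f : dom) (l : Λ), V l (K f) = κ l • starConv Φ (u l) (f : L2 d))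
    {cV : ℝ} (hcV : 0 < cV) (hcVbound : ∀ g ∈ closure (Set.range fun f : dom => K f),
      cV ^ 2 * ‖g‖ ^ 2 ≤ ∑' l : Λ, ‖V l g‖ ^ 2)
    (f : dom) {l₀ : Λ} (hκ : 0 ≤ κ l₀) (hzero : ∀ l ≠ l₀, starConv Φ (u l) f = 0) :
    ‖K f‖ ≤ cV⁻¹ * (κ l₀ * ‖starConv Φ (u l₀) f‖) := by
  have h := le_inv_mul_norm_of_sq_mul_le_tsum (x := fun l => V l (K f)) (i := l₀)
    (fun l hl => by simp only [hdiag, hzero l hl, smul_zero]) hcV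
    (hcVbound _ (subset_closure ⟨f, rfl⟩))
  rwa [hdiag, norm_smul, Real.norm_of_nonneg hκ] at h

end Channel

theorem ti_dfd_order_optimality_general {d : ℕ} {Λ : Type*}
    {Y : Type*} [NormedAddCommGroup Y] [InnerProductSpace ℂ Y]
    (Φ : FourierL2 d)
    (dom : Submodule ℂ (L2 d)) (K : dom →ₗ[ℂ] Y)
    -- the TI-DFD (u, 𝒱^*, κ):
    (u : Λ → L2 d) (hu : ∃ A B : ℝ, IsTIFrame Φ u A B)
    (V : Λ → Y →L[ℂ] L2 d)
    (κ : Λ → ℝ) (hκ : ∀ l, 0 < κ l)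
    (hdiag : ∀ (f : dom) (l : Λ), V l (K f) = κ l • starConv Φ (u l) (f : L2 d))
    -- 0 is an accumulation point of (κ_λ):
    (hacc : ∀ ε > (0 : ℝ), ∃ l : Λ, κ l < ε)
    -- the family (e_λ):
    (e : Λ → L2 d) (hedom : ∀ l, e l ∈ dom)
    (heorth : ∀ l l' : Λ, l ≠ l' → starConv Φ (u l) (e l') = 0)
    (henorm : ∀ l : Λ, ‖starConv Φ (u l) (e l)‖ = 1)
    -- norm bound CU for the TI-analysis operator 𝒰^*:
    (CU : ℝ)
    (hCUbound : ∀ f : L2 d, ∑' l : Λ, ‖starConv Φ (u l) f‖ ^ 2 ≤ CU ^ 2 * ‖f‖ ^ 2)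
    -- lower frame bound cV of 𝒱^*, so that ‖(𝒱^*)^†‖ ≤ cV⁻¹:
    (cV : ℝ) (hcV : 0 < cV)
    (hcVbound : ∀ g ∈ closure (Set.range fun f : dom => K f),
      cV ^ 2 * ‖g‖ ^ 2 ≤ ∑' l : Λ, ‖V l g‖ ^ 2)
    (μ ρ : ℝ) (hμ : 0 < μ) (hρ : 0 < ρ) :
    ∃ δs : ℕ → ℝ, (∀ n, 0 < δs n) ∧ Filter.Tendsto δs Filter.atTop (nhds 0) ∧
      ∀ n : ℕ,
        ENNReal.ofReal (CU⁻¹ * cV ^ (2 * μ / (2 * μ + 1)) *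
            δs n ^ (2 * μ / (2 * μ + 1)) * ρ ^ (1 / (2 * μ + 1))) ≤
        ⨆ (f : L2 d) (_ : (∃ hf : f ∈ dom,
            (∃ h : Λ → L2 d, (∑' l : Λ, ‖h l‖ ^ 2) ≤ ρ ^ 2 ∧
              ∀ l : Λ, starConv Φ (u l) f = (κ l ^ (2 * μ) : ℝ) • h l) ∧
            ‖K ⟨f, hf⟩‖ ≤ δs n)), ENNReal.ofReal ‖f‖ := by
  obtain ⟨A, B, hframe⟩ := hu
  choose l hl using fun n : ℕ => hacc (1 / (n + 1)) Nat.one_div_pos_of_nat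
  have hκl : Filter.Tendsto (fun n => κ (l n)) Filter.atTop (nhds 0) :=
    squeeze_zero (fun n => (hκ (l n)).le) (fun n => (hl n).le)
      tendsto_one_div_add_atTop_nhds_zero_nat
  have hκl_rpow := hκl.rpow_const (p := 2 * μ) (Or.inr (by positivity))
  rw [Real.zero_rpow (by positivity)] at hκl_rpow
  refine ⟨fun n => cV⁻¹ * (κ (l n) * (ρ * κ (l n) ^ (2 * μ))), fun n => ?_,
    by simpa using (hκl.mul (hκl_rpow.const_mul ρ)).const_mul cV⁻¹, fun n => ?_⟩
  · have := hκ (l n); positivity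
  set t := ρ * κ (l n) ^ (2 * μ)
  have ht : 0 < t := by have := hκ (l n); positivity
  set f : L2 d := (t : ℂ) • e (l n)
  have hf : f ∈ dom := dom.smul_mem _ (hedom _)
  have hzero : ∀ l' ≠ l n, starConv Φ (u l') f = 0 :=
    fun _ => starConv_smul_eq_zero_of_ne heorth _
  have hnorm : ‖starConv Φ (u (l n)) f‖ = t := by
    rw [norm_starConv_smul_self henorm, Complex.norm_real, Real.norm_of_nonneg ht.le]
  have hK : ‖K ⟨f, hf⟩‖ ≤ cV⁻¹ * (κ (l n) * t) := hnorm ▸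
    norm_apply_le_of_starConv_eq_zero_of_ne hdiag hcV hcVbound ⟨f, hf⟩ (hκ _).le hzero
  have hlow : CU⁻¹ * t ≤ ‖f‖ :=
    hnorm ▸ inv_mul_norm_le_of_tsum_le (hframe.summable Φ f) (l n) (norm_nonneg f) (hCUbound f)
  rw [mul_assoc CU⁻¹, mul_assoc CU⁻¹, rpow_rate_identity hcV hρ (hκ _) (by positivity)]
  exact le_iSup₂_of_le f ⟨hf, sourceCondition_of_starConv_eq_zero_of_ne Φ (hκ _) hzero hnorm.le, hK⟩
    (ENNReal.ofReal_le_ofReal hlow)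

/-- **order optimality.** If `(u_λ, 𝒱_λ^*, κ_λ)` is a TI-DFD for `𝒦` such
that `0` is an accumulation point of `(κ_λ)` and there are `e_λ` with
`u_λ^* ∗ e_{λ'} = 0` for `λ ≠ λ'` and `‖u_λ^* ∗ e_λ‖ = 1`, then there is a sequence
`δ_n → 0` with `ε(ℳ_{μ,ρ}, δ_n) ≥ ‖𝒰^*‖⁻¹ ‖(𝒱^*)^†‖^{-2μ/(2μ+1)} δ_n^{2μ/(2μ+1)} ρ^{1/(2μ+1)}`,
where `CU ≥ ‖𝒰^*‖` and `‖(𝒱^*)^†‖ ≤ cV⁻¹` (lower frame bound `cV` of `𝒱^*`). -/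
theorem ti_dfd_order_optimality {d : ℕ} {Λ : Type*} [Countable Λ]
    {Y : Type*} [NormedAddCommGroup Y] [InnerProductSpace ℂ Y] [CompleteSpace Y]
    (Φ : FourierL2 d)
    (dom : Submodule ℂ (L2 d)) (K : dom →ₗ[ℂ] Y)
    (hclosed : IsClosed {p : L2 d × Y | ∃ hp : p.1 ∈ dom, K ⟨p.1, hp⟩ = p.2})
    -- the TI-DFD (u, 𝒱^*, κ):
    (u : Λ → L2 d) (hu : ∃ A B : ℝ, IsTIFrame Φ u A B)
    (V : Λ → Y →L[ℂ] L2 d)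
    (κ : Λ → ℝ) (hκ : ∀ l, 0 < κ l)
    (hdiag : ∀ (f : dom) (l : Λ), V l (K f) = κ l • starConv Φ (u l) (f : L2 d))
    -- 0 is an accumulation point of (κ_λ):
    (hacc : ∀ ε > (0 : ℝ), ∃ l : Λ, κ l < ε)
    -- the family (e_λ):
    (e : Λ → L2 d) (hedom : ∀ l, e l ∈ dom)
    (heorth : ∀ l l' : Λ, l ≠ l' → starConv Φ (u l) (e l') = 0)
    (henorm : ∀ l : Λ, ‖starConv Φ (u l) (e l)‖ = 1)
    -- norm bound CU for the TI-analysis operator 𝒰^*: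
    (CU : ℝ) (hCU : 0 < CU)
    (hCUbound : ∀ f : L2 d, ∑' l : Λ, ‖starConv Φ (u l) f‖ ^ 2 ≤ CU ^ 2 * ‖f‖ ^ 2)
    -- lower frame bound cV of 𝒱^*, so that ‖(𝒱^*)^†‖ ≤ cV⁻¹:
    (cV : ℝ) (hcV : 0 < cV)
    (hcVbound : ∀ g ∈ closure (Set.range fun f : dom => K f),
      cV ^ 2 * ‖g‖ ^ 2 ≤ ∑' l : Λ, ‖V l g‖ ^ 2)
    (μ ρ : ℝ) (hμ : 0 < μ) (hρ : 0 < ρ) :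
    ∃ δs : ℕ → ℝ, (∀ n, 0 < δs n) ∧ Filter.Tendsto δs Filter.atTop (nhds 0) ∧
      ∀ n : ℕ,
        ENNReal.ofReal (CU⁻¹ * cV ^ (2 * μ / (2 * μ + 1)) *
            δs n ^ (2 * μ / (2 * μ + 1)) * ρ ^ (1 / (2 * μ + 1))) ≤
        ⨆ (f : L2 d) (_ : (∃ hf : f ∈ dom,
            (∃ h : Λ → L2 d, (∑' l : Λ, ‖h l‖ ^ 2) ≤ ρ ^ 2 ∧
              ∀ l : Λ, starConv Φ (u l) f = (κ l ^ (2 * μ) : ℝ) • h l) ∧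
            ‖K ⟨f, hf⟩‖ ≤ δs n)), ENNReal.ofReal ‖f‖ :=
  ti_dfd_order_optimality_general Φ dom K u hu V κ hκ hdiag hacc e hedom heorth henorm CU hCUbound
    cV hcV hcVbound μ ρ hμ hρ
end
end
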